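/- arXiv:1303.1259 — 2 statements merged into one kernel-verified Lean document; each statement's English description precedes it below -/
import Mathlib

section
/- Let γ: ℝ → ℝ³ be a smooth curve parametrized by centroaffine arclength, with Wilczynski invariant p₀ = |γ''', γ', γ''|. Then p₀ vanishes identically on ℝ if and only if there exists a fixed vector w ∈ ℝ³ such that ⟨w, γ(x)⟩ = 1 for all x (i.e. γ lies in a plane not containing the origin); moreover, in that case w may be taken to be the constant value of the cross product γ'(x) × γ''(x). -/
/-- `det3 u v w` is the determinant of the 3×3 matrix with columns (equivalently, rows)
`u`, `v`, `w` in `ℝ³`. -/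
noncomputable def det3 (u v w : Fin 3 → ℝ) : ℝ := Matrix.det (Matrix.of ![u, v, w])

lemma det3_expand (u v w : Fin 3 → ℝ) :
    det3 u v w = u 0 * v 1 * w 2 - u 0 * v 2 * w 1 - u 1 * v 0 * w 2 + u 1 * v 2 * w 0
      + u 2 * v 0 * w 1 - u 2 * v 1 * w 0 := by
  simp [det3, Matrix.det_fin_three]

lemma hasDerivAt_comp_proj {f : ℝ → Fin 3 → ℝ} (hf : Differentiable ℝ f) (x : ℝ) (i : Fin 3) :
    HasDerivAt (fun t => f t i) (deriv f x i) x :=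
  hasDerivAt_pi.mp (hf x).hasDerivAt i

lemma eq_zero_of_hasDerivAt_const {F : ℝ → ℝ} {e c x : ℝ}
    (h : HasDerivAt F e x) (hF : ∀ t, F t = c) : e = 0 := by
  have hFc : F = fun _ => c := funext hF
  rw [hFc] at h
  exact h.unique (hasDerivAt_const x c)

lemma det3_hasDerivAt {f g h : ℝ → Fin 3 → ℝ} {f' g' h' : Fin 3 → ℝ} {x : ℝ}
    (hf : ∀ i, HasDerivAt (fun t => f t i) (f' i) x)
    (hg : ∀ i, HasDerivAt (fun t => g t i) (g' i) x)
    (hh : ∀ i, HasDerivAt (fun t => h t i) (h' i) x) :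
    HasDerivAt (fun t => det3 (f t) (g t) (h t))
      (det3 f' (g x) (h x) + det3 (f x) g' (h x) + det3 (f x) (g x) h') x := by
  simp only [det3_expand]
  have H := (((((((hf 0).mul (hg 1)).mul (hh 2)).sub
      (((hf 0).mul (hg 2)).mul (hh 1))).sub
      (((hf 1).mul (hg 0)).mul (hh 2))).add
      (((hf 1).mul (hg 2)).mul (hh 0))).add
      (((hf 2).mul (hg 0)).mul (hh 1))).sub
      (((hf 2).mul (hg 1)).mul (hh 0))
  refine H.congr_deriv ?_
  simp only [Pi.mul_apply]
  ring

lemma cross13_eq_zero (g g1 g2 g3 : Fin 3 → ℝ)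
    (h1 : det3 g g1 g2 = 1) (h2 : det3 g g1 g3 = 0) (h3 : det3 g3 g1 g2 = 0) :
    crossProduct g1 g3 = 0 := by
  rw [det3_expand] at h1 h2 h3
  funext i
  fin_cases i <;>
    simp only [Fin.zero_eta, Fin.mk_one, Fin.reduceFinMk, cross_apply, Matrix.cons_val_zero,
      Matrix.cons_val_one, Matrix.head_cons, Matrix.cons_val_two, Matrix.tail_cons,
      Pi.zero_apply] <;>
  [ linear_combination (g1 1 * g2 2 - g1 2 * g2 1) * h2 - (g 1 * g1 2 - g 2 * g1 1) * h3
      - (g1 1 * g3 2 - g1 2 * g3 1) * h1;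
    linear_combination (g1 2 * g2 0 - g1 0 * g2 2) * h2 - (g 2 * g1 0 - g 0 * g1 2) * h3
      - (g1 2 * g3 0 - g1 0 * g3 2) * h1;
    linear_combination (g1 0 * g2 1 - g1 1 * g2 0) * h2 - (g 0 * g1 1 - g 1 * g1 0) * h3
      - (g1 0 * g3 1 - g1 1 * g3 0) * h1]

lemma det3_eq_zero_of_perp (w a b c : Fin 3 → ℝ) (i : Fin 3) (hw : w i ≠ 0)
    (ha : w 0 * a 0 + w 1 * a 1 + w 2 * a 2 = 0)
    (hb : w 0 * b 0 + w 1 * b 1 + w 2 * b 2 = 0)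
    (hc : w 0 * c 0 + w 1 * c 1 + w 2 * c 2 = 0) :
    det3 a b c = 0 := by
  have key : det3 a b c * w i = 0 := by
    rw [det3_expand]
    fin_cases i <;> simp only [Fin.zero_eta, Fin.mk_one, Fin.reduceFinMk] <;>
    [ linear_combination (b 1 * c 2 - b 2 * c 1) * ha + (c 1 * a 2 - c 2 * a 1) * hb
        + (a 1 * b 2 - a 2 * b 1) * hc;
      linear_combination (b 2 * c 0 - b 0 * c 2) * ha + (c 2 * a 0 - c 0 * a 2) * hb
        + (a 2 * b 0 - a 0 * b 2) * hc;
      linear_combination (b 0 * c 1 - b 1 * c 0) * ha + (c 0 * a 1 - c 1 * a 0) * hb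
        + (a 0 * b 1 - a 1 * b 0) * hc]
  exact (mul_eq_zero.mp key).resolve_right hw

/-- For a smooth centroaffine arclength-parametrized curve `γ` in `ℝ³`, the Wilczynski
invariant `p₀ = |γ''', γ', γ''|` vanishes identically iff there is a fixed vector `w`
with `⟨w, γ(x)⟩ = 1` for all `x` (the curve lies in a plane not through the origin);
moreover, in that case the cross product `γ' × γ''` is constant and pairs to `1` with `γ`. -/
theorem centroaffine_p0_vanishes_iff_planar
    (γ : ℝ → Fin 3 → ℝ) (hγ : ContDiff ℝ (⊤ : ℕ∞) γ)
    (harc : ∀ x, det3 (γ x) (deriv γ x) (deriv (deriv γ) x) = 1) :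
    ((∀ x, det3 (deriv (deriv (deriv γ)) x) (deriv γ x) (deriv (deriv γ) x) = 0) ↔
      ∃ w : Fin 3 → ℝ, ∀ x, ∑ i, w i * γ x i = 1) ∧
    ((∀ x, det3 (deriv (deriv (deriv γ)) x) (deriv γ x) (deriv (deriv γ) x) = 0) →
      (∀ x y, crossProduct (deriv γ x) (deriv (deriv γ) x)
            = crossProduct (deriv γ y) (deriv (deriv γ) y)) ∧
      (∀ x, ∑ i, crossProduct (deriv γ x) (deriv (deriv γ) x) i * γ x i = 1)) := by
  have hs : ContDiff ℝ (↑(⊤ : ℕ∞)) γ := hγ.of_le (by simp)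
  have hd0 : Differentiable ℝ γ := hs.differentiable (by simp)
  have hs1 : ContDiff ℝ (↑(⊤ : ℕ∞)) (deriv γ) := (contDiff_infty_iff_deriv.mp hs).2
  have hd1 : Differentiable ℝ (deriv γ) := hs1.differentiable (by simp)
  have hs2 : ContDiff ℝ (↑(⊤ : ℕ∞)) (deriv (deriv γ)) := (contDiff_infty_iff_deriv.mp hs1).2
  have hd2 : Differentiable ℝ (deriv (deriv γ)) := hs2.differentiable (by simp)
  have c0 : ∀ (x : ℝ) (i : Fin 3), HasDerivAt (fun t => γ t i) (deriv γ x i) x :=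
    fun x i => hasDerivAt_comp_proj hd0 x i
  have c1 : ∀ (x : ℝ) (i : Fin 3),
      HasDerivAt (fun t => deriv γ t i) (deriv (deriv γ) x i) x :=
    fun x i => hasDerivAt_comp_proj hd1 x i
  have c2 : ∀ (x : ℝ) (i : Fin 3),
      HasDerivAt (fun t => deriv (deriv γ) t i) (deriv (deriv (deriv γ)) x i) x :=
    fun x i => hasDerivAt_comp_proj hd2 x i
  -- derivative of the arclength normalization: |γ, γ', γ'''| = 0
  have hA : ∀ x, det3 (γ x) (deriv γ x) (deriv (deriv (deriv γ)) x) = 0 := by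
    intro x
    have H := det3_hasDerivAt (c0 x) (c1 x) (c2 x)
    have h0 := eq_zero_of_hasDerivAt_const H harc
    have e1 : det3 (deriv γ x) (deriv γ x) (deriv (deriv γ) x) = 0 := by
      rw [det3_expand]; ring
    have e2 : det3 (γ x) (deriv (deriv γ) x) (deriv (deriv γ) x) = 0 := by
      rw [det3_expand]; ring
    linarith [h0, e1, e2]
  -- the main forward implication
  have main : (∀ x, det3 (deriv (deriv (deriv γ)) x) (deriv γ x) (deriv (deriv γ) x) = 0) →
      (∀ x y, crossProduct (deriv γ x) (deriv (deriv γ) x)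
            = crossProduct (deriv γ y) (deriv (deriv γ) y)) ∧
      (∀ x, ∑ i, crossProduct (deriv γ x) (deriv (deriv γ) x) i * γ x i = 1) := by
    intro hp
    have hc13 : ∀ x, crossProduct (deriv γ x) (deriv (deriv (deriv γ)) x) = 0 :=
      fun x => cross13_eq_zero _ _ _ _ (harc x) (hA x) (hp x)
    have hBconst : ∀ x y, crossProduct (deriv γ x) (deriv (deriv γ) x)
        = crossProduct (deriv γ y) (deriv (deriv γ) y) := by
      have hB : ∀ x, HasDerivAt (fun t => crossProduct (deriv γ t) (deriv (deriv γ) t))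
          (0 : Fin 3 → ℝ) x := by
        intro x
        rw [hasDerivAt_pi]
        intro i
        have hcx := hc13 x
        fin_cases i <;>
          simp only [Fin.zero_eta, Fin.mk_one, Fin.reduceFinMk, cross_apply,
            Matrix.cons_val_zero, Matrix.cons_val_one, Matrix.head_cons, Matrix.cons_val_two,
            Matrix.tail_cons, Pi.zero_apply] <;>
          simp only [cross_apply] at hcx
        · have hc0 := congrFun hcx 0
          simp only [Matrix.cons_val_zero, Pi.zero_apply] at hc0
          have H := (((c1 x 1).mul (c2 x 2)).sub ((c1 x 2).mul (c2 x 1)))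
          refine H.congr_deriv ?_
          linear_combination hc0
        · have hc1 := congrFun hcx 1
          simp only [Matrix.cons_val_one, Matrix.head_cons, Matrix.cons_val_zero, Pi.zero_apply] at hc1
          have H := (((c1 x 2).mul (c2 x 0)).sub ((c1 x 0).mul (c2 x 2)))
          refine H.congr_deriv ?_
          linear_combination hc1
        · have hc2 := congrFun hcx 2
          simp only [Matrix.cons_val_two, Matrix.tail_cons, Matrix.head_cons,
            Pi.zero_apply] at hc2
          have H := (((c1 x 0).mul (c2 x 1)).sub ((c1 x 1).mul (c2 x 0)))
          refine H.congr_deriv ?_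
          linear_combination hc2
      exact is_const_of_deriv_eq_zero (fun x => (hB x).differentiableAt)
        (fun x => (hB x).deriv) 
    have hpair : ∀ x, ∑ i, crossProduct (deriv γ x) (deriv (deriv γ) x) i * γ x i = 1 := by
      intro x
      have h := harc x
      rw [det3_expand] at h
      simp only [Fin.sum_univ_three, cross_apply, Matrix.cons_val_zero, Matrix.cons_val_one,
        Matrix.head_cons, Matrix.cons_val_two, Matrix.tail_cons]
      linear_combination h
    exact ⟨hBconst, hpair⟩
  refine ⟨⟨fun hp => ?_, fun hw => ?_⟩, main⟩
  · obtain ⟨hconst, hpair⟩ := main hp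
    refine ⟨crossProduct (deriv γ 0) (deriv (deriv γ) 0), fun x => ?_⟩
    rw [hconst 0 x]
    exact hpair x
  · obtain ⟨w, hw⟩ := hw
    intro x
    -- w is nonzero
    obtain ⟨i, hi⟩ : ∃ i, w i ≠ 0 := by
      by_contra h
      push_neg at h
      have h0 := hw 0
      simp [Fin.sum_univ_three, h] at h0
    -- ⟨w, γ'⟩ = 0
    have dw1 : ∀ x, w 0 * deriv γ x 0 + w 1 * deriv γ x 1 + w 2 * deriv γ x 2 = 0 := by
      intro x
      have H : HasDerivAt (fun t => w 0 * γ t 0 + w 1 * γ t 1 + w 2 * γ t 2)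
          (w 0 * deriv γ x 0 + w 1 * deriv γ x 1 + w 2 * deriv γ x 2) x :=
        (((c0 x 0).const_mul (w 0)).add ((c0 x 1).const_mul (w 1))).add
          ((c0 x 2).const_mul (w 2))
      exact eq_zero_of_hasDerivAt_const H (fun t => by
        have := hw t; rwa [Fin.sum_univ_three] at this)
    have dw2 : ∀ x, w 0 * deriv (deriv γ) x 0 + w 1 * deriv (deriv γ) x 1
        + w 2 * deriv (deriv γ) x 2 = 0 := by
      intro x
      have H : HasDerivAt (fun t => w 0 * deriv γ t 0 + w 1 * deriv γ t 1 + w 2 * deriv γ t 2)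
          (w 0 * deriv (deriv γ) x 0 + w 1 * deriv (deriv γ) x 1
            + w 2 * deriv (deriv γ) x 2) x :=
        (((c1 x 0).const_mul (w 0)).add ((c1 x 1).const_mul (w 1))).add
          ((c1 x 2).const_mul (w 2))
      exact eq_zero_of_hasDerivAt_const H dw1
    have dw3 : w 0 * deriv (deriv (deriv γ)) x 0 + w 1 * deriv (deriv (deriv γ)) x 1
        + w 2 * deriv (deriv (deriv γ)) x 2 = 0 := by
      have H : HasDerivAt (fun t => w 0 * deriv (deriv γ) t 0 + w 1 * deriv (deriv γ) t 1
            + w 2 * deriv (deriv γ) t 2)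
          (w 0 * deriv (deriv (deriv γ)) x 0 + w 1 * deriv (deriv (deriv γ)) x 1
            + w 2 * deriv (deriv (deriv γ)) x 2) x :=
        (((c2 x 0).const_mul (w 0)).add ((c2 x 1).const_mul (w 1))).add
          ((c2 x 2).const_mul (w 2))
      exact eq_zero_of_hasDerivAt_const H dw2
    exact det3_eq_zero_of_perp w _ _ _ i hi dw3 (dw1 x) (dw2 x)
end

section
/- Let Γ: ℝ × (−ε, ε) → ℝ³ be a smooth family of curves such that γ := Γ(·, 0) is parametrized by centroaffine arclength, and suppose ∂Γ/∂t(x, 0) = a·γ + b·γ' + c·γ'' for smooth real functions a, b, c. Let p₁(·, t) = |Γ, Γ_xxx, Γ_xx| and let p₀, p₁ (without time argument) denote the Wilczynski invariants of γ. Then ∂p₁/∂t at t = 0 equals 3p₁a + 3c'p₀ + 2cp₀' + 3a'' + b''' + 4c''p₁ + 3c'p₁' + cp₁'' + 5b'p₁ + bp₁' + 2cp₁². -/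
open Set

lemma det3_eq (u v w : Fin 3 → ℝ) :
    det3 u v w = u 0 * (v 1 * w 2 - v 2 * w 1) - u 1 * (v 0 * w 2 - v 2 * w 0)
      + u 2 * (v 0 * w 1 - v 1 * w 0) := by
  simp [det3, Matrix.det_fin_three]; ring

lemma det3_cramer (u v w z : Fin 3 → ℝ) (h : det3 u v w = 1) :
    z = det3 z v w • u + det3 u z w • v + det3 u v z • w := by
  have key : ∀ i, det3 z v w * u i + det3 u z w * v i + det3 u v z * w i
      = det3 u v w * z i := by
    have k0 : det3 z v w * u 0 + det3 u z w * v 0 + det3 u v z * w 0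
        = det3 u v w * z 0 := by simp only [det3_eq]; ring
    have k1 : det3 z v w * u 1 + det3 u z w * v 1 + det3 u v z * w 1
        = det3 u v w * z 1 := by simp only [det3_eq]; ring
    have k2 : det3 z v w * u 2 + det3 u z w * v 2 + det3 u v z * w 2
        = det3 u v w * z 2 := by simp only [det3_eq]; ring
    intro i; fin_cases i
    exacts [k0, k1, k2]
  funext i
  have := key i
  rw [h, one_mul] at this
  simpa [Pi.add_apply, Pi.smul_apply, smul_eq_mul] using this.symm

lemma det3_combo (u v w : Fin 3 → ℝ) (α₁ β₁ δ₁ α₂ β₂ δ₂ α₃ β₃ δ₃ : ℝ) :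
    det3 (α₁•u+β₁•v+δ₁•w) (α₂•u+β₂•v+δ₂•w) (α₃•u+β₃•v+δ₃•w)
      = (α₁*(β₂*δ₃ - δ₂*β₃) - β₁*(α₂*δ₃-δ₂*α₃) + δ₁*(α₂*β₃-β₂*α₃)) * det3 u v w := by
  simp only [det3_eq, Pi.add_apply, Pi.smul_apply, smul_eq_mul]; ring

lemma hasDerivAt_det3 {u v w : ℝ → Fin 3 → ℝ} {u' v' w' : Fin 3 → ℝ} {t : ℝ}
    (hu : HasDerivAt u u' t) (hv : HasDerivAt v v' t) (hw : HasDerivAt w w' t) :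
    HasDerivAt (fun s => det3 (u s) (v s) (w s))
      (det3 u' (v t) (w t) + det3 (u t) v' (w t) + det3 (u t) (v t) w') t := by
  have hc : ∀ (f : ℝ → Fin 3 → ℝ) (f' : Fin 3 → ℝ), HasDerivAt f f' t →
      ∀ i, HasDerivAt (fun s => f s i) (f' i) t := by
    intro f f' hf i
    exact (ContinuousLinearMap.proj (R := ℝ) (φ := fun _ : Fin 3 => ℝ)
      i).hasFDerivAt.comp_hasDerivAt t hf
  have hu0 := hc u u' hu 0; have hu1 := hc u u' hu 1; have hu2 := hc u u' hu 2
  have hv0 := hc v v' hv 0; have hv1 := hc v v' hv 1; have hv2 := hc v v' hv 2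
  have hw0 := hc w w' hw 0; have hw1 := hc w w' hw 1; have hw2 := hc w w' hw 2
  have H := ((((hu0.mul (hv1.mul hw2)).sub (hu0.mul (hv2.mul hw1))).sub
      ((hu1.mul (hv0.mul hw2)).sub (hu1.mul (hv2.mul hw0)))).add
      ((hu2.mul (hv0.mul hw1)).sub (hu2.mul (hv1.mul hw0))))
  have hfun : (fun s => det3 (u s) (v s) (w s))
      = (fun x => u x 0 * (v x 1 * w x 2) - u x 0 * (v x 2 * w x 1)
          - (u x 1 * (v x 0 * w x 2) - u x 1 * (v x 2 * w x 0))
          + (u x 2 * (v x 0 * w x 1) - u x 2 * (v x 1 * w x 0))) := by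
    funext s; rw [det3_eq]; ring
  rw [hfun]
  refine H.congr_deriv ?_
  simp only [det3_eq, Pi.mul_apply]; ring

noncomputable def pdx (f : ℝ × ℝ → Fin 3 → ℝ) : ℝ × ℝ → Fin 3 → ℝ :=
  fun p => fderiv ℝ f p (1, 0)
noncomputable def pdt (f : ℝ × ℝ → Fin 3 → ℝ) : ℝ × ℝ → Fin 3 → ℝ :=
  fun p => fderiv ℝ f p (0, 1)

lemma one_le_infty : (1 : WithTop ℕ∞) ≤ (⊤ : ℕ∞) := by
  exact_mod_cast (le_top : (1:ℕ∞) ≤ ⊤)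

lemma two_le_infty : (2 : WithTop ℕ∞) ≤ (⊤ : ℕ∞) := by
  have : ((2 : ℕ∞) : WithTop ℕ∞) ≤ ((⊤ : ℕ∞) : WithTop ℕ∞) := WithTop.coe_le_coe.2 le_top
  simpa using this

section PD
variable {f : ℝ × ℝ → Fin 3 → ℝ} {U : Set (ℝ × ℝ)}

lemma contDiffOn_fderiv (hU : IsOpen U) (hf : ContDiffOn ℝ (⊤ : ℕ∞) f U) :
    ContDiffOn ℝ (⊤ : ℕ∞) (fderiv ℝ f) U :=
  ((contDiffOn_infty_iff_fderiv_of_isOpen hU).1 hf).2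

lemma contDiffOn_pdx (hU : IsOpen U) (hf : ContDiffOn ℝ (⊤ : ℕ∞) f U) :
    ContDiffOn ℝ (⊤ : ℕ∞) (pdx f) U :=
  (contDiffOn_fderiv hU hf).clm_apply contDiffOn_const

lemma contDiffOn_pdt (hU : IsOpen U) (hf : ContDiffOn ℝ (⊤ : ℕ∞) f U) :
    ContDiffOn ℝ (⊤ : ℕ∞) (pdt f) U :=
  (contDiffOn_fderiv hU hf).clm_apply contDiffOn_const

lemma hasDerivAt_pdx (hU : IsOpen U) (hf : ContDiffOn ℝ (⊤ : ℕ∞) f U) {p : ℝ × ℝ}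
    (hp : p ∈ U) : HasDerivAt (fun x' => f (x', p.2)) (pdx f p) p.1 := by
  have hd : HasFDerivAt f (fderiv ℝ f p) p :=
    ((hf.differentiableOn (by simp)).differentiableAt (hU.mem_nhds hp)).hasFDerivAt
  have hl : HasDerivAt (fun x' : ℝ => (x', p.2)) ((1 : ℝ), (0 : ℝ)) p.1 :=
    (hasDerivAt_id p.1).prodMk (hasDerivAt_const p.1 p.2)
  exact hd.comp_hasDerivAt p.1 hl

lemma hasDerivAt_pdt (hU : IsOpen U) (hf : ContDiffOn ℝ (⊤ : ℕ∞) f U) {p : ℝ × ℝ}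
    (hp : p ∈ U) : HasDerivAt (fun t => f (p.1, t)) (pdt f p) p.2 := by
  have hd : HasFDerivAt f (fderiv ℝ f p) p :=
    ((hf.differentiableOn (by simp)).differentiableAt (hU.mem_nhds hp)).hasFDerivAt
  have hl : HasDerivAt (fun t : ℝ => (p.1, t)) ((0 : ℝ), (1 : ℝ)) p.2 :=
    (hasDerivAt_const p.2 p.1).prodMk (hasDerivAt_id p.2)
  exact hd.comp_hasDerivAt p.2 hl

lemma pdt_pdx_comm (hU : IsOpen U) (hf : ContDiffOn ℝ (⊤ : ℕ∞) f U) {p : ℝ × ℝ}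
    (hp : p ∈ U) : pdt (pdx f) p = pdx (pdt f) p := by
  have hA : ContDiffOn ℝ (⊤ : ℕ∞) (fderiv ℝ f) U := contDiffOn_fderiv hU hf
  have hAd : DifferentiableAt ℝ (fderiv ℝ f) p :=
    (hA.differentiableOn (by simp)).differentiableAt (hU.mem_nhds hp)
  have h1 : ∀ v w : ℝ × ℝ, fderiv ℝ (fun q => fderiv ℝ f q v) p w
      = fderiv ℝ (fderiv ℝ f) p w v := by
    intro v w
    have h2 := (hAd.hasFDerivAt.clm_apply (hasFDerivAt_const v p)).fderiv
    rw [h2]; simp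
  have hsymm : IsSymmSndFDerivAt ℝ f p :=
    (hf.contDiffAt (hU.mem_nhds hp)).isSymmSndFDerivAt
      (by rw [minSmoothness_of_isRCLikeNormedField]; exact two_le_infty)
  have e1 : pdx f = fun q => fderiv ℝ f q (1, 0) := rfl
  have e2 : pdt f = fun q => fderiv ℝ f q (0, 1) := rfl
  simp only [pdt, pdx, e1, e2, h1]
  exact hsymm _ _

end PD

lemma diffs_of_contDiff {F : Type*} [NormedAddCommGroup F] [NormedSpace ℝ F] {q : ℝ → F}
    (hq : ContDiff ℝ (⊤ : ℕ∞) q) :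
    Differentiable ℝ q ∧ Differentiable ℝ (deriv q) ∧ Differentiable ℝ (deriv (deriv q))
      ∧ ContDiff ℝ (⊤ : ℕ∞) (deriv q) ∧ ContDiff ℝ (⊤ : ℕ∞) (deriv (deriv q))
      ∧ ContDiff ℝ (⊤ : ℕ∞) (deriv (deriv (deriv q))) := by
  obtain ⟨h1, h2⟩ := contDiff_infty_iff_deriv.1 hq
  obtain ⟨h3, h4⟩ := contDiff_infty_iff_deriv.1 h2
  obtain ⟨h5, h6⟩ := contDiff_infty_iff_deriv.1 h4
  exact ⟨h1, h3, h5, h2, h4, h6⟩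

lemma contDiff_det3_comp {f g h : ℝ → Fin 3 → ℝ} (hf : ContDiff ℝ (⊤:ℕ∞) f)
    (hg : ContDiff ℝ (⊤:ℕ∞) g) (hh : ContDiff ℝ (⊤:ℕ∞) h) :
    ContDiff ℝ (⊤:ℕ∞) (fun x => det3 (f x) (g x) (h x)) := by
  have hfi := fun i => contDiff_pi.1 hf i
  have hgi := fun i => contDiff_pi.1 hg i
  have hhi := fun i => contDiff_pi.1 hh i
  have : (fun x => det3 (f x) (g x) (h x))
      = fun x => f x 0 * (g x 1 * h x 2 - g x 2 * h x 1)
        - f x 1 * (g x 0 * h x 2 - g x 2 * h x 0)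
        + f x 2 * (g x 0 * h x 1 - g x 1 * h x 0) := by
    funext x; rw [det3_eq]
  rw [this]
  exact (((hfi 0).mul (((hgi 1).mul (hhi 2)).sub ((hgi 2).mul (hhi 1)))).sub
      ((hfi 1).mul (((hgi 0).mul (hhi 2)).sub ((hgi 2).mul (hhi 0))))).add
      ((hfi 2).mul (((hgi 0).mul (hhi 1)).sub ((hgi 1).mul (hhi 0))))

/-- First variation of the Wilczynski invariant `p₁ = |Γ, Γ_xxx, Γ_xx|` along a variation
field `X = aγ + bγ' + cγ''` of a centroaffine arclength-parametrized curve `γ`: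
`δp₁ = 3p₁a + 3c'p₀ + 2cp₀' + 3a'' + b''' + 4c''p₁ + 3c'p₁' + cp₁'' + 5b'p₁ + bp₁' + 2cp₁²`. -/
theorem variation_of_p1
    (ε : ℝ) (hε : 0 < ε) (Γ : ℝ → ℝ → Fin 3 → ℝ)
    (hΓ : ContDiffOn ℝ (⊤ : ℕ∞) (fun p : ℝ × ℝ => Γ p.1 p.2) (Set.univ ×ˢ Set.Ioo (-ε) ε))
    (γ : ℝ → Fin 3 → ℝ) (hγ : γ = fun x => Γ x 0)
    (harc : ∀ x, det3 (γ x) (deriv γ x) (deriv (deriv γ) x) = 1)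
    (a b c : ℝ → ℝ)
    (ha : ContDiff ℝ (⊤ : ℕ∞) a) (hb : ContDiff ℝ (⊤ : ℕ∞) b) (hc : ContDiff ℝ (⊤ : ℕ∞) c)
    (hX : ∀ x, deriv (fun t => Γ x t) 0
        = a x • γ x + b x • deriv γ x + c x • deriv (deriv γ) x)
    (p₀ p₁ : ℝ → ℝ)
    (hp₀ : ∀ x, p₀ x = det3 (deriv (deriv (deriv γ)) x) (deriv γ x) (deriv (deriv γ) x))
    (hp₁ : ∀ x, p₁ x = det3 (γ x) (deriv (deriv (deriv γ)) x) (deriv (deriv γ) x))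
    (Γx Γxx Γxxx : ℝ → ℝ → Fin 3 → ℝ)
    (hΓx : ∀ x t, Γx x t = deriv (fun x' => Γ x' t) x)
    (hΓxx : ∀ x t, Γxx x t = deriv (fun x' => Γx x' t) x)
    (hΓxxx : ∀ x t, Γxxx x t = deriv (fun x' => Γxx x' t) x) :
    ∀ x, deriv (fun t => det3 (Γ x t) (Γxxx x t) (Γxx x t)) 0
      = 3 * p₁ x * a x + 3 * deriv c x * p₀ x + 2 * c x * deriv p₀ x
        + 3 * deriv (deriv a) x + deriv (deriv (deriv b)) x
        + 4 * deriv (deriv c) x * p₁ x + 3 * deriv c x * deriv p₁ x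
        + c x * deriv (deriv p₁) x + 5 * deriv b x * p₁ x + b x * deriv p₁ x
        + 2 * c x * (p₁ x)^2 := by
  intro x
  -- sets
  have hSopen : IsOpen (Set.Ioo (-ε) ε) := isOpen_Ioo
  have h0S : (0:ℝ) ∈ Set.Ioo (-ε) ε := ⟨by linarith, hε⟩
  set U : Set (ℝ × ℝ) := Set.univ ×ˢ Set.Ioo (-ε) ε with hUdef
  have hUopen : IsOpen U := isOpen_univ.prod hSopen
  have hmem : ∀ x' t : ℝ, t ∈ Set.Ioo (-ε) ε → (x', t) ∈ U :=
    fun x' t ht => ⟨mem_univ _, ht⟩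
  -- the jointly smooth function and its partial x-derivatives
  set f0 : ℝ × ℝ → Fin 3 → ℝ := fun p => Γ p.1 p.2 with hf0def
  have hf0C : ContDiffOn ℝ (⊤:ℕ∞) f0 U := hΓ.of_le (by simp)
  have hf1C : ContDiffOn ℝ (⊤:ℕ∞) (pdx f0) U := contDiffOn_pdx hUopen hf0C
  have hf2C : ContDiffOn ℝ (⊤:ℕ∞) (pdx (pdx f0)) U := contDiffOn_pdx hUopen hf1C
  have hf3C : ContDiffOn ℝ (⊤:ℕ∞) (pdx (pdx (pdx f0))) U := contDiffOn_pdx hUopen hf2C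
  -- smoothness of γ and its derivatives
  have hγC : ContDiff ℝ (⊤:ℕ∞) γ := by
    have hgeq : γ = f0 ∘ (fun y : ℝ => (y, (0:ℝ))) := by
      funext y; simp [hγ, hf0def]
    rw [hgeq, ← contDiffOn_univ]
    exact hf0C.comp (contDiff_id.prodMk contDiff_const).contDiffOn
      (fun y _ => hmem y 0 h0S)
  set D1 := deriv γ with hD1def
  set D2 := deriv D1 with hD2def
  set D3 := deriv D2 with hD3def
  obtain ⟨hγdiff, hD1diff, hD2diff, hD1C, hD2C, hD3C⟩ := diffs_of_contDiff hγC
  have hγHD : ∀ y, HasDerivAt γ (D1 y) y := fun y => (hγdiff y).hasDerivAt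
  have hD1HD : ∀ y, HasDerivAt D1 (D2 y) y := fun y => (hD1diff y).hasDerivAt
  have hD2HD : ∀ y, HasDerivAt D2 (D3 y) y := fun y => (hD2diff y).hasDerivAt
  -- the variation field
  set X : ℝ → Fin 3 → ℝ := fun y => a y • γ y + b y • D1 y + c y • D2 y with hXdef
  -- slices at t = 0
  have hΓx0 : ∀ y, Γx y 0 = D1 y := by
    intro y; rw [hΓx, hD1def, hγ]
  have hΓxx0 : ∀ y, Γxx y 0 = D2 y := by
    intro y
    rw [hΓxx, hD2def]
    congr 1
    exact funext fun y' => hΓx0 y'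
  have hΓxxx0 : ∀ y, Γxxx y 0 = D3 y := by
    intro y
    rw [hΓxxx, hD3def]
    congr 1
    exact funext fun y' => hΓxx0 y'
  -- x-slices on U
  have hf1eq : ∀ y t, t ∈ Set.Ioo (-ε) ε → Γx y t = pdx f0 (y, t) := by
    intro y t ht
    rw [hΓx]
    exact (hasDerivAt_pdx hUopen hf0C (hmem y t ht)).deriv
  have hf2eq : ∀ y t, t ∈ Set.Ioo (-ε) ε → Γxx y t = pdx (pdx f0) (y, t) := by
    intro y t ht
    rw [hΓxx]
    have hfn : (fun y' => Γx y' t) = (fun y' => pdx f0 (y', t)) :=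
      funext fun y' => hf1eq y' t ht
    rw [hfn]
    exact (hasDerivAt_pdx hUopen hf1C (hmem y t ht)).deriv
  have hf3eq : ∀ y t, t ∈ Set.Ioo (-ε) ε → Γxxx y t = pdx (pdx (pdx f0)) (y, t) := by
    intro y t ht
    rw [hΓxxx]
    have hfn : (fun y' => Γxx y' t) = (fun y' => pdx (pdx f0) (y', t)) :=
      funext fun y' => hf2eq y' t ht
    rw [hfn]
    exact (hasDerivAt_pdx hUopen hf2C (hmem y t ht)).deriv
  -- time derivatives via Clairaut
  have hXpdt : ∀ y, pdt f0 (y, 0) = X y := by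
    intro y
    have h := (hasDerivAt_pdt hUopen hf0C (hmem y 0 h0S)).deriv
    rw [← h]
    exact hX y
  have claim1 : ∀ y, pdt (pdx f0) (y, 0) = deriv X y := by
    intro y
    have hcomm := pdt_pdx_comm hUopen hf0C (hmem y 0 h0S)
    have hg : ContDiffOn ℝ (⊤:ℕ∞) (pdt f0) U := contDiffOn_pdt hUopen hf0C
    have hd := (hasDerivAt_pdx hUopen hg (hmem y 0 h0S)).deriv
    have hfun : (fun y' => pdt f0 (y', (0:ℝ))) = X := funext fun y' => hXpdt y'
    rw [hcomm, ← hd, hfun]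
  have claim2 : ∀ y, pdt (pdx (pdx f0)) (y, 0) = deriv (deriv X) y := by
    intro y
    have hcomm := pdt_pdx_comm hUopen hf1C (hmem y 0 h0S)
    have hg : ContDiffOn ℝ (⊤:ℕ∞) (pdt (pdx f0)) U := contDiffOn_pdt hUopen hf1C
    have hd := (hasDerivAt_pdx hUopen hg (hmem y 0 h0S)).deriv
    have hfun : (fun y' => pdt (pdx f0) (y', (0:ℝ))) = deriv X :=
      funext fun y' => claim1 y'
    rw [hcomm, ← hd, hfun]
  have claim3 : ∀ y, pdt (pdx (pdx (pdx f0))) (y, 0) = deriv (deriv (deriv X)) y := by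
    intro y
    have hcomm := pdt_pdx_comm hUopen hf2C (hmem y 0 h0S)
    have hg : ContDiffOn ℝ (⊤:ℕ∞) (pdt (pdx (pdx f0))) U := contDiffOn_pdt hUopen hf2C
    have hd := (hasDerivAt_pdx hUopen hg (hmem y 0 h0S)).deriv
    have hfun : (fun y' => pdt (pdx (pdx f0)) (y', (0:ℝ))) = deriv (deriv X) :=
      funext fun y' => claim2 y'
    rw [hcomm, ← hd, hfun]
  -- HasDerivAt in t at 0 for the three curves
  have hSev : Set.Ioo (-ε) ε ∈ nhds (0:ℝ) := hSopen.mem_nhds h0S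
  have hu : HasDerivAt (fun t => Γ x t) (X x) 0 := by
    have h := hasDerivAt_pdt hUopen hf0C (hmem x 0 h0S)
    rw [hXpdt x] at h
    exact h
  have hw : HasDerivAt (fun t => Γxx x t) (deriv (deriv X) x) 0 := by
    have h := hasDerivAt_pdt hUopen hf2C (hmem x 0 h0S)
    rw [claim2 x] at h
    apply h.congr_of_eventuallyEq
    filter_upwards [hSev] with t ht
    exact hf2eq x t ht
  have hv : HasDerivAt (fun t => Γxxx x t) (deriv (deriv (deriv X)) x) 0 := by
    have h := hasDerivAt_pdt hUopen hf3C (hmem x 0 h0S)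
    rw [claim3 x] at h
    apply h.congr_of_eventuallyEq
    filter_upwards [hSev] with t ht
    exact hf3eq x t ht
  have hder := (hasDerivAt_det3 hu hv hw).deriv
  rw [hder]
  have hΓ00 : Γ x 0 = γ x := by rw [hγ]
  rw [hΓ00, hΓxx0 x, hΓxxx0 x]
  -- smoothness of p₀ and p₁
  have hp₀C : ContDiff ℝ (⊤:ℕ∞) p₀ := by
    have : p₀ = fun y => det3 (D3 y) (D1 y) (D2 y) := funext fun y => hp₀ y
    rw [this]; exact contDiff_det3_comp hD3C hD1C hD2C
  have hp₁C : ContDiff ℝ (⊤:ℕ∞) p₁ := by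
    have : p₁ = fun y => det3 (γ y) (D3 y) (D2 y) := funext fun y => hp₁ y
    rw [this]; exact contDiff_det3_comp hγC hD3C hD2C
  obtain ⟨hp₀diff, hdp₀diff, _, hdp₀C, _, _⟩ := diffs_of_contDiff hp₀C
  obtain ⟨hp₁diff, hdp₁diff, hddp₁diff, hdp₁C, hddp₁C, _⟩ := diffs_of_contDiff hp₁C
  obtain ⟨hadiff, hdadiff, hddadiff, hdaC, hddaC, _⟩ := diffs_of_contDiff (ha.of_le (by simp))
  obtain ⟨hbdiff, hdbdiff, hddbdiff, hdbC, hddbC, hdddbC⟩ := diffs_of_contDiff (hb.of_le (by simp))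
  obtain ⟨hcdiff, hdcdiff, hddcdiff, hdcC, hddcC, _⟩ := diffs_of_contDiff (hc.of_le (by simp))
  -- the structure equation
  have hzero : ∀ y, det3 (γ y) (D1 y) (D3 y) = 0 := by
    intro y
    have hF := hasDerivAt_det3 (hγHD y) (hD1HD y) (hD2HD y)
    have hconst : (fun s => det3 (γ s) (D1 s) (D2 s)) = fun _ => (1:ℝ) :=
      funext fun s => harc s
    have hdz : deriv (fun s => det3 (γ s) (D1 s) (D2 s)) y = 0 := by
      rw [hconst]; simp
    rw [hF.deriv] at hdz
    have z1 : det3 (D1 y) (D1 y) (D2 y) = 0 := by simp only [det3_eq]; ring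
    have z2 : det3 (γ y) (D2 y) (D2 y) = 0 := by simp only [det3_eq]; ring
    rw [z1, z2] at hdz
    linarith
  have hstruct : ∀ y, D3 y = p₀ y • γ y + p₁ y • D1 y := by
    intro y
    have h := det3_cramer (γ y) (D1 y) (D2 y) (D3 y) (harc y)
    rw [hzero y, ← hp₀ y, ← hp₁ y] at h
    simpa using h
  -- derivative of a combination field
  have combo : ∀ (α β δ : ℝ → ℝ), Differentiable ℝ α → Differentiable ℝ β →
      Differentiable ℝ δ → ∀ y,
      HasDerivAt (fun s => α s • γ s + β s • D1 s + δ s • D2 s)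
        ((deriv α y + δ y * p₀ y) • γ y + (α y + deriv β y + δ y * p₁ y) • D1 y
          + (β y + deriv δ y) • D2 y) y := by
    intro α β δ hα hβ hδ y
    have h1 := (((hα y).hasDerivAt.smul (hγHD y)).add
        ((hβ y).hasDerivAt.smul (hD1HD y))).add ((hδ y).hasDerivAt.smul (hD2HD y))
    refine h1.congr_deriv ?_
    rw [hstruct y]
    module
  -- named coefficient functions
  set A1 : ℝ → ℝ := fun y => deriv a y + c y * p₀ y with hA1def
  set B1 : ℝ → ℝ := fun y => a y + deriv b y + c y * p₁ y with hB1def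
  set C1 : ℝ → ℝ := fun y => b y + deriv c y with hC1def
  have hA1diff : Differentiable ℝ A1 := hdadiff.add (hcdiff.mul hp₀diff)
  have hB1diff : Differentiable ℝ B1 := (hadiff.add hdbdiff).add (hcdiff.mul hp₁diff)
  have hC1diff : Differentiable ℝ C1 := hbdiff.add hdcdiff
  set A2 : ℝ → ℝ := fun y => deriv A1 y + C1 y * p₀ y with hA2def
  set B2 : ℝ → ℝ := fun y => A1 y + deriv B1 y + C1 y * p₁ y with hB2def
  set C2 : ℝ → ℝ := fun y => B1 y + deriv C1 y with hC2def
  have hA1C : ContDiff ℝ (⊤:ℕ∞) A1 := hdaC.add (hc.of_le (by simp) |>.mul hp₀C)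
  have hB1C : ContDiff ℝ (⊤:ℕ∞) B1 :=
    ((ha.of_le (by simp)).add hdbC).add ((hc.of_le (by simp)).mul hp₁C)
  have hC1C : ContDiff ℝ (⊤:ℕ∞) C1 := (hb.of_le (by simp)).add hdcC
  have hA2diff : Differentiable ℝ A2 :=
    ((contDiff_infty_iff_deriv.1 hA1C).2.differentiable (by simp)).add
      (hC1diff.mul hp₀diff)
  have hB2diff : Differentiable ℝ B2 :=
    (hA1diff.add ((contDiff_infty_iff_deriv.1 hB1C).2.differentiable (by simp))).add
      (hC1diff.mul hp₁diff)
  have hC2diff : Differentiable ℝ C2 :=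
    hB1diff.add ((contDiff_infty_iff_deriv.1 hC1C).2.differentiable (by simp))
  -- derivatives of X
  have hXd1 : deriv X = fun y => A1 y • γ y + B1 y • D1 y + C1 y • D2 y := by
    funext y
    exact (combo a b c hadiff hbdiff hcdiff y).deriv
  have hXd2 : deriv (deriv X) = fun y => A2 y • γ y + B2 y • D1 y + C2 y • D2 y := by
    funext y
    rw [hXd1]
    exact (combo A1 B1 C1 hA1diff hB1diff hC1diff y).deriv
  have hXd3 : deriv (deriv (deriv X)) x
      = (deriv A2 x + C2 x * p₀ x) • γ x + (A2 x + deriv B2 x + C2 x * p₁ x) • D1 x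
        + (B2 x + deriv C2 x) • D2 x := by
    rw [hXd2]
    exact (combo A2 B2 C2 hA2diff hB2diff hC2diff x).deriv
  -- expand the three determinants
  have eX : X x = a x • γ x + b x • D1 x + c x • D2 x := rfl
  have eD3 : D3 x = p₀ x • γ x + p₁ x • D1 x + (0:ℝ) • D2 x := by
    rw [hstruct x]; simp
  have eγx : γ x = (1:ℝ) • γ x + (0:ℝ) • D1 x + (0:ℝ) • D2 x := by simp
  have eD2x : D2 x = (0:ℝ) • γ x + (0:ℝ) • D1 x + (1:ℝ) • D2 x := by simp
  have harc1 : det3 (γ x) (D1 x) (D2 x) = 1 := harc x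
  have T1 : det3 (X x) (D3 x) (D2 x) = a x * p₁ x - b x * p₀ x := by
    have h := det3_combo (γ x) (D1 x) (D2 x) (a x) (b x) (c x) (p₀ x) (p₁ x) 0 0 0 1
    simp only [zero_smul, one_smul, add_zero, zero_add] at h
    rw [eX, hstruct x, h, harc1]; ring
  have T2 : det3 (γ x) (deriv (deriv (deriv X)) x) (D2 x)
      = A2 x + deriv B2 x + C2 x * p₁ x := by
    have h := det3_combo (γ x) (D1 x) (D2 x) 1 0 0
      (deriv A2 x + C2 x * p₀ x) (A2 x + deriv B2 x + C2 x * p₁ x) (B2 x + deriv C2 x) 0 0 1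
    simp only [zero_smul, one_smul, add_zero, zero_add] at h
    rw [hXd3, h, harc1]; ring
  have T3 : det3 (γ x) (D3 x) (deriv (deriv X) x) = p₁ x * C2 x := by
    have h := det3_combo (γ x) (D1 x) (D2 x) 1 0 0 (p₀ x) (p₁ x) 0 (A2 x) (B2 x) (C2 x)
    simp only [zero_smul, one_smul, add_zero, zero_add] at h
    have h2 : deriv (deriv X) x = A2 x • γ x + B2 x • D1 x + C2 x • D2 x := by
      rw [hXd2]
    rw [hstruct x, h2, h, harc1]; ring
  -- derivative expansions of the coefficient functions
  have dA1 : ∀ y, deriv A1 y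
      = deriv (deriv a) y + (deriv c y * p₀ y + c y * deriv p₀ y) := by
    intro y
    exact ((hdadiff y).hasDerivAt.add
      ((hcdiff y).hasDerivAt.mul (hp₀diff y).hasDerivAt)).deriv
  have dB1 : ∀ y, deriv B1 y
      = deriv a y + deriv (deriv b) y + (deriv c y * p₁ y + c y * deriv p₁ y) := by
    intro y
    exact (((hadiff y).hasDerivAt.add (hdbdiff y).hasDerivAt).add
      ((hcdiff y).hasDerivAt.mul (hp₁diff y).hasDerivAt)).deriv
  have dC1 : ∀ y, deriv C1 y = deriv b y + deriv (deriv c) y := by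
    intro y
    exact ((hbdiff y).hasDerivAt.add (hdcdiff y).hasDerivAt).deriv
  -- derivative of B2 at x, fully in primitives
  have hB2fun : B2 = fun y => (deriv a y + c y * p₀ y)
      + (deriv a y + deriv (deriv b) y + (deriv c y * p₁ y + c y * deriv p₁ y))
      + (b y + deriv c y) * p₁ y := by
    funext y
    rw [hB2def]
    simp only [hA1def, hC1def, dB1 y]
  have dB2 : deriv B2 x
      = (deriv (deriv a) x + (deriv c x * p₀ x + c x * deriv p₀ x))
        + ((deriv (deriv a) x + deriv (deriv (deriv b)) x)
            + ((deriv (deriv c) x * p₁ x + deriv c x * deriv p₁ x)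
              + (deriv c x * deriv p₁ x + c x * deriv (deriv p₁) x)))
        + ((deriv b x + deriv (deriv c) x) * p₁ x + (b x + deriv c x) * deriv p₁ x) := by
    rw [hB2fun]
    exact ((((hdadiff x).hasDerivAt.add
        ((hcdiff x).hasDerivAt.mul (hp₀diff x).hasDerivAt)).add
      (((hdadiff x).hasDerivAt.add (hddbdiff x).hasDerivAt).add
        (((hdcdiff x).hasDerivAt.mul (hp₁diff x).hasDerivAt).add
          ((hcdiff x).hasDerivAt.mul (hdp₁diff x).hasDerivAt)))).add
      (((hbdiff x).hasDerivAt.add (hdcdiff x).hasDerivAt).mul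
        (hp₁diff x).hasDerivAt)).deriv
  -- final assembly
  rw [T1, T2, T3]
  simp only [dB2]
  simp only [hA2def, hB2def, hC2def]
  simp only [dA1, dB1, dC1]
  simp only [hA1def, hB1def, hC1def]
  ring
end
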